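/- arXiv:2110.14394 — 3 statements merged into one kernel-verified Lean document; each statement's English description precedes it below -/
import Mathlib

section
/- Let G be a graph, and suppose V(G) is partitioned into sets X₁, …, X_k such that α(G[Xᵢ]) ≤ 2 for all i, and such that for each i, every vertex of X_{i+1} has a neighbor in every non-edge of G[Xᵢ] and every vertex of Xᵢ has a neighbor in every non-edge of G[X_{i+1}]. Then every stable set S of G satisfies |S ∩ (Xᵢ ∪ X_{i+1})| ≤ 2 for each i, and hence |S| ≤ k + 1. -/
/-!
If a stable set `S` met two consecutive blocks in three vertices, then, as each block meets `S`
in at most two vertices, one block would contain a non-edge `xy` of `S` and the other a vertex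
`v` of `S`; by hypothesis `v` is adjacent to `x` or `y`, contradicting stability. Hence the
numbers `aᵢ = |S ∩ Xᵢ|` satisfy `aᵢ + aᵢ₊₁ ≤ 2`, and summing over consecutive pairs gives
`|S| ≤ k + 1`.
-/

def SimpleGraph.IsStableSet {V : Type*} (G : SimpleGraph V) (s : Set V) : Prop :=
  s.Pairwise fun u v => ¬ G.Adj u v

theorem Set.ncard_biUnion_le {α ι : Type*} (t : Finset ι) (s : ι → Set α) :
    (⋃ i ∈ t, s i).ncard ≤ ∑ i ∈ t, (s i).ncard := by
  classical
  induction t using Finset.induction_on with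
  | empty => simp
  | insert a t ha ih =>
    rw [Finset.set_biUnion_insert, Finset.sum_insert ha]
    exact (ncard_union_le _ _).trans (Nat.add_le_add_left ih _)

theorem Set.ncard_iUnion_le {α ι : Type*} [Fintype ι] (s : ι → Set α) :
    (⋃ i, s i).ncard ≤ ∑ i, (s i).ncard := by
  simpa using ncard_biUnion_le Finset.univ s

theorem Finset.sum_range_le_of_add_succ_le (f : ℕ → ℕ) (c : ℕ)
    (h : ∀ n, f n + f (n + 1) ≤ 2 * c) (k : ℕ) :
    ∑ n ∈ range k, f n ≤ c * (k + 1) := by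
  induction k using Nat.twoStepInduction with
  | zero => simp
  | one => have := h 0; simp only [sum_range_one]; omega
  | more m ih _ =>
    rw [sum_range_succ, sum_range_succ]
    have := h m
    linarith

theorem Fin.sum_le_of_add_succ_le {k : ℕ} (a : Fin k → ℕ) (c : ℕ) (h₁ : ∀ i, a i ≤ 2 * c)
    (h₂ : ∀ i j : Fin k, (j : ℕ) = i + 1 → a i + a j ≤ 2 * c) :
    ∑ i, a i ≤ c * (k + 1) := by
  let f : ℕ → ℕ := fun n => if hn : n < k then a ⟨n, hn⟩ else 0
  have hf : ∀ n, f n + f (n + 1) ≤ 2 * c := by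
    intro n
    by_cases hn : n + 1 < k
    · simpa [f, hn, Nat.lt_of_succ_lt hn] using h₂ ⟨n, by omega⟩ ⟨n + 1, hn⟩ rfl
    · by_cases hn' : n < k
      · simpa [f, hn, hn'] using h₁ ⟨n, hn'⟩
      · simp [f, hn, hn']
  calc ∑ i, a i = ∑ n ∈ Finset.range k, f n := by
        rw [← Fin.sum_univ_eq_sum_range]
        simp [f]
    _ ≤ c * (k + 1) := Finset.sum_range_le_of_add_succ_le f c hf k

namespace SimpleGraph

variable {V : Type*} {G : SimpleGraph V}

def DominatesNonEdges (G : SimpleGraph V) (B A : Set V) : Prop :=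
  ∀ v ∈ B, ∀ x ∈ A, ∀ y ∈ A, x ≠ y → ¬ G.Adj x y → G.Adj v x ∨ G.Adj v y

theorem IsStableSet.mono {s t : Set V} (ht : G.IsStableSet t) (hst : s ⊆ t) :
    G.IsStableSet s :=
  Set.Pairwise.mono hst ht

theorem IsStableSet.ncard_inter_le_one {S A B : Set V} (hS : G.IsStableSet S)
    (hBA : G.DominatesNonEdges B A) (hB : (S ∩ B).Nonempty) : (S ∩ A).ncard ≤ 1 := by
  by_contra! hA
  obtain ⟨x, hx, y, hy, hxy⟩ := (Set.one_lt_ncard (Set.finite_of_ncard_pos (by omega))).1 hA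
  obtain ⟨v, hvS, hvB⟩ := hB
  have hnadj : ¬ G.Adj v x ∧ ¬ G.Adj v y :=
    ⟨fun h => hS hvS hx.1 h.ne h, fun h => hS hvS hy.1 h.ne h⟩
  have := hBA v hvB x hx.2 y hy.2 hxy (hS hx.1 hy.1 hxy)
  tauto

theorem IsStableSet.ncard_inter_add_ncard_inter_le_two {S A B : Set V} (hS : G.IsStableSet S)
    (hA : (S ∩ A).ncard ≤ 2) (hB : (S ∩ B).ncard ≤ 2)
    (hBA : G.DominatesNonEdges B A) (hAB : G.DominatesNonEdges A B) :
    (S ∩ A).ncard + (S ∩ B).ncard ≤ 2 := by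
  rcases (S ∩ A).eq_empty_or_nonempty with hA₀ | hA₀
  · simpa [hA₀] using hB
  rcases (S ∩ B).eq_empty_or_nonempty with hB₀ | hB₀
  · simpa [hB₀] using hA
  have := hS.ncard_inter_le_one hBA hB₀
  have := hS.ncard_inter_le_one hAB hA₀
  omega

end SimpleGraph

theorem stmt_10_general {V : Type*} (G : SimpleGraph V) (k : ℕ)
    (X : Fin k → Set V)
    (hcover : (⋃ i, X i) = Set.univ)
    (halpha : ∀ i : Fin k, ∀ S : Set V, S ⊆ X i → G.IsStableSet S → S.ncard ≤ 2)
    (hfwd : ∀ i j : Fin k, (j : ℕ) = (i : ℕ) + 1 →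
      ∀ v ∈ X j, ∀ x ∈ X i, ∀ y ∈ X i, x ≠ y → ¬ G.Adj x y → G.Adj v x ∨ G.Adj v y)
    (hbwd : ∀ i j : Fin k, (j : ℕ) = (i : ℕ) + 1 →
      ∀ v ∈ X i, ∀ x ∈ X j, ∀ y ∈ X j, x ≠ y → ¬ G.Adj x y → G.Adj v x ∨ G.Adj v y)
    (S : Set V) (hS : G.IsStableSet S) :
    (∀ i j : Fin k, (j : ℕ) = (i : ℕ) + 1 → (S ∩ (X i ∪ X j)).ncard ≤ 2) ∧
      S.ncard ≤ k + 1 := by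
  have hblock : ∀ i, (S ∩ X i).ncard ≤ 2 := fun i =>
    halpha i _ Set.inter_subset_right (hS.mono Set.inter_subset_left)
  have hpair : ∀ i j : Fin k, (j : ℕ) = i + 1 → (S ∩ X i).ncard + (S ∩ X j).ncard ≤ 2 :=
    fun i j hij => hS.ncard_inter_add_ncard_inter_le_two (hblock i) (hblock j)
      (hfwd i j hij) (hbwd i j hij)
  refine ⟨fun i j hij => ?_, ?_⟩
  · rw [Set.inter_union_distrib_left]
    exact (Set.ncard_union_le _ _).trans (hpair i j hij)
  · calc S.ncard = (⋃ i, S ∩ X i).ncard := by rw [← Set.inter_iUnion, hcover, Set.inter_univ]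
      _ ≤ ∑ i, (S ∩ X i).ncard := Set.ncard_iUnion_le _
      _ ≤ 1 * (k + 1) := Fin.sum_le_of_add_succ_le _ 1 hblock hpair
      _ = k + 1 := one_mul _

theorem stmt_10 {V : Type*} [Fintype V] (G : SimpleGraph V) (k : ℕ) (hk : 1 ≤ k)
    (X : Fin k → Set V)
    (hdisj : Pairwise fun i j => Disjoint (X i) (X j))
    (hcover : (⋃ i, X i) = Set.univ)
    (halpha : ∀ i : Fin k, ∀ S : Set V, S ⊆ X i → G.IsStableSet S → S.ncard ≤ 2)
    (hfwd : ∀ i j : Fin k, (j : ℕ) = (i : ℕ) + 1 →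
      ∀ v ∈ X j, ∀ x ∈ X i, ∀ y ∈ X i, x ≠ y → ¬ G.Adj x y → G.Adj v x ∨ G.Adj v y)
    (hbwd : ∀ i j : Fin k, (j : ℕ) = (i : ℕ) + 1 →
      ∀ v ∈ X i, ∀ x ∈ X j, ∀ y ∈ X j, x ≠ y → ¬ G.Adj x y → G.Adj v x ∨ G.Adj v y)
    (S : Set V) (hS : G.IsStableSet S) :
    (∀ i j : Fin k, (j : ℕ) = (i : ℕ) + 1 → (S ∩ (X i ∪ X j)).ncard ≤ 2) ∧
      S.ncard ≤ k + 1 :=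
  stmt_10_general G k X hcover halpha hfwd hbwd S hS
end

section
/- Let G be a finite simple graph on n vertices such that for every vertex v, the independence number of the neighborhood graph G[N(v)] is at least (1/4)·|N(v)|^{1/(d-3)}, where d ≥ 5. Then α(G) ≥ (1/4)·n^{1/(d-2)}. -/
/-!
Let `Δ` be the maximum degree and `m = n ^ (1 / (d - 2))`. If `Δ ≥ m ^ (d - 3)`, the stable set in
the neighbourhood of a vertex of maximum degree already has `(1/4) Δ ^ (1 / (d - 3)) ≥ m / 4`
elements. Otherwise a maximum stable set dominates the graph, so
`n ≤ (Δ + 1) α(G) ≤ 2 m ^ (d - 3) α(G)`, and `n = m ^ (d - 2)` gives `α(G) ≥ m / 2`.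
-/

open Finset Real

theorem quarter_mul_rpow_le_of_le_succ_mul {e a : ℝ} (he : 0 < e) {n D : ℕ}
    (hD : 1 / 4 * (D : ℝ) ^ (1 / e) ≤ a) (hn : (n : ℝ) ≤ (D + 1) * a) :
    1 / 4 * (n : ℝ) ^ (1 / (e + 1)) ≤ a := by
  have ha : 0 ≤ a := le_trans (by positivity) hD
  set m := (n : ℝ) ^ (1 / (e + 1)) with hm
  have hm0 : 0 ≤ m := by positivity
  by_cases hlarge : m ^ e ≤ D
  · have : m ≤ (D : ℝ) ^ (1 / e) :=
      calc m = (m ^ e) ^ (1 / e) := by rw [one_div, rpow_rpow_inv hm0 he.ne']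
        _ ≤ (D : ℝ) ^ (1 / e) := by gcongr
    linarith
  rcases Nat.eq_zero_or_pos n with rfl | hpos
  · rw [hm, Nat.cast_zero, zero_rpow (by positivity), mul_zero]
    exact ha
  have hme : 1 ≤ m ^ e :=
    one_le_rpow (one_le_rpow (by exact_mod_cast hpos) (by positivity)) he.le
  have hnm : (n : ℝ) = m ^ e * m := by
    rw [← rpow_add_one' hm0 (by positivity), hm, one_div,
      rpow_inv_rpow (Nat.cast_nonneg n) (by positivity)]
  have : m ^ e * m ≤ m ^ e * (2 * a) :=
    calc m ^ e * m = n := hnm.symm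
      _ ≤ (D + 1) * a := hn
      _ ≤ (m ^ e + m ^ e) * a := by gcongr; linarith
      _ = m ^ e * (2 * a) := by ring
  linarith [le_of_mul_le_mul_left this (by positivity)]

namespace SimpleGraph

variable {V : Type*} {G : SimpleGraph V}

theorem exists_adj_of_maximal_isIndepSet {s : Set V} (hs : Maximal G.IsIndepSet s) {v : V}
    (hv : v ∉ s) : ∃ u ∈ s, G.Adj v u := by
  by_contra! h
  have hins : G.IsIndepSet (insert v s) :=
    Set.pairwise_insert.2 ⟨hs.prop, fun u hu _ => ⟨h u hu, fun huv => h u hu huv.symm⟩⟩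
  exact hv (hs.eq_of_subset hins (Set.subset_insert v s) ▸ Set.mem_insert v s)

theorem IsIndepSet.ncard_le_indepNum [Finite V] {s : Set V} (hs : G.IsIndepSet s) :
    s.ncard ≤ G.indepNum := by
  obtain ⟨t, rfl⟩ := s.toFinite.exists_finset_coe
  rw [Set.ncard_coe_finset]
  exact hs.card_le_indepNum

theorem card_le_maxDegree_add_one_mul_indepNum [Fintype V] [DecidableRel G.Adj] :
    Fintype.card V ≤ (G.maxDegree + 1) * G.indepNum := by
  classical
  obtain ⟨s, hs⟩ := G.maximumIndepSet_exists
  have hcover : (univ : Finset V) ⊆ s.biUnion fun u => insert u (G.neighborFinset u) := by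
    intro v _
    by_cases hv : v ∈ s
    · exact mem_biUnion.2 ⟨v, hv, mem_insert_self v _⟩
    · obtain ⟨u, hu, hvu⟩ := exists_adj_of_maximal_isIndepSet (hs.isMaximalIndepSet s) hv
      exact mem_biUnion.2 ⟨u, hu, mem_insert_of_mem ((G.mem_neighborFinset u v).2 hvu.symm)⟩
  calc Fintype.card V = #univ := card_univ.symm
    _ ≤ #(s.biUnion fun u => insert u (G.neighborFinset u)) := card_le_card hcover
    _ ≤ ∑ u ∈ s, #(insert u (G.neighborFinset u)) := card_biUnion_le
    _ ≤ ∑ _u ∈ s, (G.maxDegree + 1) := sum_le_sum fun u _ =>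
        (card_insert_le _ _).trans (Nat.add_le_add_right (G.degree_le_maxDegree u) 1)
    _ = (G.maxDegree + 1) * G.indepNum := by
        rw [sum_const, smul_eq_mul, mul_comm, maximumIndepSet_card_eq_indepNum s hs]

theorem quarter_mul_card_rpow_le_indepNum [Fintype V] [DecidableRel G.Adj] {e : ℝ} (he : 0 < e)
    (h : ∀ v, 1 / 4 * (G.degree v : ℝ) ^ (1 / e) ≤ G.indepNum) :
    1 / 4 * (Fintype.card V : ℝ) ^ (1 / (e + 1)) ≤ G.indepNum := by
  cases isEmpty_or_nonempty V
  · rw [Fintype.card_eq_zero, Nat.cast_zero, zero_rpow (by positivity), mul_zero]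
    positivity
  obtain ⟨v, hv⟩ := G.exists_maximal_degree_vertex
  exact quarter_mul_rpow_le_of_le_succ_mul he (hv ▸ h v)
    (by exact_mod_cast G.card_le_maxDegree_add_one_mul_indepNum)

end SimpleGraph

theorem stmt_12_general {V : Type*} [Fintype V] (G : SimpleGraph V)
    [DecidableRel G.Adj] (d : ℕ) (hd : 5 ≤ d) (n : ℕ) (hn : n = Fintype.card V)
    (hnbr : ∀ v : V, ∃ S : Set V, S ⊆ G.neighborSet v ∧ G.IsStableSet S ∧
      (1 / 4 : ℝ) * (G.degree v : ℝ) ^ ((1 : ℝ) / ((d : ℝ) - 3)) ≤ (S.ncard : ℝ)) :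
    ∃ S : Set V, G.IsStableSet S ∧
      (1 / 4 : ℝ) * (n : ℝ) ^ ((1 : ℝ) / ((d : ℝ) - 2)) ≤ (S.ncard : ℝ) := by
  obtain ⟨S, hS, hcard⟩ := G.exists_isNIndepSet_indepNum
  -- `IsStableSet` unfolds to Mathlib's `IsIndepSet`, here and for `hT` below.
  refine ⟨S, hS, ?_⟩
  have he : (0 : ℝ) < d - 3 := by
    have : (5 : ℝ) ≤ d := by exact_mod_cast hd
    linarith
  rw [Set.ncard_coe_finset, hcard, hn, show (d : ℝ) - 2 = d - 3 + 1 by ring]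
  refine G.quarter_mul_card_rpow_le_indepNum he fun v => ?_
  obtain ⟨T, -, hT, hTcard⟩ := hnbr v
  exact hTcard.trans (by exact_mod_cast SimpleGraph.IsIndepSet.ncard_le_indepNum hT)

theorem stmt_12 {V : Type*} [Fintype V] [DecidableEq V] (G : SimpleGraph V)
    [DecidableRel G.Adj] (d : ℕ) (hd : 5 ≤ d) (n : ℕ) (hn : n = Fintype.card V)
    (hnbr : ∀ v : V, ∃ S : Set V, S ⊆ G.neighborSet v ∧ G.IsStableSet S ∧
      (1 / 4 : ℝ) * (G.degree v : ℝ) ^ ((1 : ℝ) / ((d : ℝ) - 3)) ≤ (S.ncard : ℝ)) :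
    ∃ S : Set V, G.IsStableSet S ∧
      (1 / 4 : ℝ) * (n : ℝ) ^ ((1 : ℝ) / ((d : ℝ) - 2)) ≤ (S.ncard : ℝ) :=
  stmt_12_general G d hd n hn hnbr
end

section
/- Let G be a finite simple graph on n vertices such that every induced subgraph of every vertex neighborhood is 4-colorable (e.g., all neighborhood graphs are planar), so that α(G[N(v)]) ≥ |N(v)|/4 for every vertex v. Then α(G) ≥ (1/4)·n^{1/2}. -/
open Finset

namespace SimpleGraph

variable {V W : Type*} {G : SimpleGraph V}

theorem IsIndepSet.image {H : SimpleGraph W} (f : H ↪g G) {s : Set W} (hs : H.IsIndepSet s) :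
    G.IsIndepSet (f '' s) := by
  rintro _ ⟨x, hx, rfl⟩ _ ⟨y, hy, rfl⟩ hxy hadj
  exact hs hx hy (ne_of_apply_ne f hxy) (f.map_adj_iff.1 hadj)

theorem indepNum_le_of_embedding [Finite V] {H : SimpleGraph W} (f : H ↪g G) :
    H.indepNum ≤ G.indepNum := by
  classical
  obtain ⟨s, hs⟩ := exists_isNIndepSet_indepNum (G := H)
  rw [← hs.card_eq, ← s.card_map f.toEmbedding]
  exact IsIndepSet.card_le_indepNum (by simpa using hs.isIndepSet.image f)

theorem Colorable.card_le_mul_indepNum [Fintype V] {k : ℕ} (h : G.Colorable k) :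
    Fintype.card V ≤ k * G.indepNum := by
  classical
  obtain ⟨C⟩ := h
  rcases isEmpty_or_nonempty V with hV | ⟨⟨v⟩⟩
  · simp
  obtain ⟨c, -, hc⟩ := exists_max_image univ (fun c => #{x | C x = c}) ⟨C v, mem_univ _⟩
  have hindep : G.IsIndepSet ({x | C x = c} : Finset V) := by
    intro x hx y hy _ hadj
    exact C.valid hadj (by simp_all)
  calc Fintype.card V = ∑ c', #{x | C x = c'} := card_eq_sum_card_fiberwise (by simp)
    _ ≤ ∑ _c' : Fin k, #{x | C x = c} := sum_le_sum fun c' _ => hc c' (mem_univ _)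
    _ = k * #{x | C x = c} := by simp
    _ ≤ k * G.indepNum := Nat.mul_le_mul_left k hindep.card_le_indepNum

theorem degree_le_mul_indepNum [Fintype V] [DecidableRel G.Adj] {k : ℕ} {v : V}
    (h : (G.induce (G.neighborSet v)).Colorable k) : G.degree v ≤ k * G.indepNum := by
  rw [← card_neighborSet_eq_degree]
  exact h.card_le_mul_indepNum.trans
    (Nat.mul_le_mul_left k (indepNum_le_of_embedding (Embedding.induce _)))

theorem card_le_mul_indepNum_of_degree_le [Fintype V] [DecidableRel G.Adj] {d : ℕ}
    (hd : ∀ v, G.degree v ≤ d) : Fintype.card V ≤ (d + 1) * G.indepNum := by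
  classical
  obtain ⟨S, hS⟩ := maximumIndepSet_exists (G := G)
  have hdom : ∀ v, ∃ u ∈ S, v ∈ insert u (G.neighborFinset u) := by
    intro v
    by_contra! h
    have hv : v ∉ S := fun hv => h v hv (mem_insert_self _ _)
    refine hv ((hS.isMaximalIndepSet S).mem_of_prop_insert ?_)
    have hnadj : ∀ u ∈ S, ¬G.Adj u v := fun u hu hadj => h u hu (by simp [hadj])
    exact Set.pairwise_insert.2
      ⟨hS.isIndepSet, fun u hu _ => ⟨fun hadj => hnadj u hu hadj.symm, hnadj u hu⟩⟩
  calc Fintype.card V = #(univ : Finset V) := rfl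
    _ ≤ #(S.biUnion fun u => insert u (G.neighborFinset u)) :=
        card_le_card fun v _ => mem_biUnion.2 (hdom v)
    _ ≤ ∑ u ∈ S, #(insert u (G.neighborFinset u)) := card_biUnion_le
    _ ≤ ∑ _u ∈ S, (d + 1) :=
        sum_le_sum fun u _ => (card_insert_le _ _).trans (by simpa using hd u)
    _ = (d + 1) * G.indepNum := by
        rw [sum_const, smul_eq_mul, maximumIndepSet_card_eq_indepNum S hS, mul_comm]

end SimpleGraph

theorem stmt_14_general {V : Type*} [Fintype V] (G : SimpleGraph V) (n : ℕ) (hn : n = Fintype.card V)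
    (hnbr : ∀ v : V, (G.induce (G.neighborSet v)).Colorable 4) :
    ∃ S : Set V, G.IsStableSet S ∧
      (1 / 4 : ℝ) * Real.sqrt n ≤ (S.ncard : ℝ) := by
  classical
  obtain ⟨S, hS⟩ := G.exists_isNIndepSet_indepNum
  refine ⟨S, hS.isIndepSet, ?_⟩ -- `IsStableSet` unfolds to Mathlib's `IsIndepSet`
  rw [Set.ncard_coe_finset, hS.card_eq]
  suffices √n ≤ 4 * G.indepNum by linarith
  by_cases hdeg : ∀ v, G.degree v ≤ ⌊√n⌋₊
  · have hcard : (n : ℝ) ≤ (⌊√n⌋₊ + 1) * G.indepNum := by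
      have hcard_nat := G.card_le_mul_indepNum_of_degree_le hdeg
      rw [← hn] at hcard_nat
      exact_mod_cast hcard_nat
    have hfloor : (⌊√n⌋₊ : ℝ) ≤ √n := Nat.floor_le (Real.sqrt_nonneg _)
    have hsq : √n ^ 2 = n := Real.sq_sqrt (Nat.cast_nonneg n)
    rcases Nat.eq_zero_or_pos n with rfl | hpos
    · simp
    have hone : 1 ≤ √n := Real.one_le_sqrt.2 (by exact_mod_cast hpos)
    nlinarith
  · obtain ⟨v, hv⟩ := not_forall.1 hdeg
    have hdeg_le : G.degree v ≤ 4 * G.indepNum := G.degree_le_mul_indepNum (hnbr v)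
    calc √n ≤ G.degree v := ((Nat.floor_lt (Real.sqrt_nonneg _)).1 (not_le.1 hv)).le
      _ ≤ 4 * G.indepNum := by exact_mod_cast hdeg_le

theorem stmt_14 {V : Type*} [Fintype V] [DecidableEq V] (G : SimpleGraph V)
    [DecidableRel G.Adj] (n : ℕ) (hn : n = Fintype.card V)
    (hnbr : ∀ v : V, (G.induce (G.neighborSet v)).Colorable 4) :
    ∃ S : Set V, G.IsStableSet S ∧
      (1 / 4 : ℝ) * Real.sqrt n ≤ (S.ncard : ℝ) :=
  stmt_14_general G n hn hnbr
end
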